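/- Let (i,B,α) be an A-dynamical system and E : B → A an α-expectation, with associated map φ = E∘α|_A. If k ∈ ker E (i.e., E(BkB) = {0}), then α(k) ∈ ker E. Hence ker E is an α-invariant closed two-sided ideal of B. -/

import Mathlib

/-!
For `k ∈ ker E`, the Schwarz inequality `E(y)⋆E(y) ≤ E(y⋆y)` reduces `α k ∈ ker E` to
`E(c⋆ α(k⋆k) c) = 0` for all `c`. By positivity of `E` the set of such `c` is a closed subspace,
so it suffices to treat the products `α^{n₁}(a₁) ⋯ α^{n_m}(a_m)` spanning `B`. A leading factor
`α(β)` is absorbed into `k`, as `α(β)⋆ α(k⋆k) α(β) = α((kβ)⋆(kβ))` with `kβ ∈ ker E`, and (E1)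
gives `E(α(k⋆k)) = E(α(E(k⋆k))) = 0`. A leading factor `a ∈ A` produces
`τ = a⋆ α(k⋆k) a ∈ [ABA]` with `E τ = 0`, and multiplicativity of `E` on `[ABA]` forces
`E(x⋆ τ x) = 0` for every `x`.
-/

open scoped ComplexOrder

variable {B : Type*} [NonUnitalNormedRing B] [StarRing B] [CStarRing B]
  [NormedSpace ℂ B] [IsScalarTower ℂ B B] [SMulCommClass ℂ B B] [StarModule ℂ B]
  [CompleteSpace B] [PartialOrder B] [StarOrderedRing B]

/-- The hereditary subalgebra `[ABA]` generated by `A` in `B`: the closed linear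
span of `{a x b : a, b ∈ A, x ∈ B}`. -/
def hereditarySpan (A : NonUnitalStarSubalgebra ℂ B) : Set B :=
  closure (Submodule.span ℂ {z : B | ∃ a ∈ A, ∃ b ∈ A, ∃ x : B, z = a * x * b} : Set B)

/-- A conditional expectation of `B` onto the C*-subalgebra `A`: an idempotent
positive `A`-bimodule map with range `A`. -/
def IsCondExp (A : NonUnitalStarSubalgebra ℂ B) (E : B →L[ℂ] B) : Prop :=
  (∀ x, E x ∈ A) ∧ (∀ a ∈ A, E a = a) ∧ (∀ x : B, 0 ≤ x → 0 ≤ E x) ∧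
  (∀ a ∈ A, ∀ x, E (a * x) = a * E x) ∧ (∀ a ∈ A, ∀ x, E (x * a) = E x * a)

/-- The product `α^{n₁}(a₁) ⋯ α^{n_k}(a_k)` associated to a list of pairs
`(nᵢ, aᵢ)` (and `0` for the empty list). -/
def prodOf (α : B → B) : List (ℕ × B) → B
  | [] => 0
  | p :: rest => rest.foldl (fun acc q => acc * (α^[q.1] q.2)) (α^[p.1] p.2)

/-- `(A, B, α)` is an `A`-dynamical system: `B` is the closed linear span of the
finite products `α^{n₁}(a₁) ⋯ α^{n_k}(a_k)` with `aᵢ ∈ A`, `nᵢ ≥ 0`. -/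
def IsDynSystem (A : NonUnitalStarSubalgebra ℂ B) (α : B →⋆ₙₐ[ℂ] B) : Prop :=
  (Submodule.span ℂ {x : B | ∃ l : List (ℕ × B), l ≠ [] ∧ (∀ p ∈ l, p.2 ∈ A) ∧
    x = prodOf (⇑α) l}).topologicalClosure = ⊤

/-- An `α`-expectation: a conditional expectation `E : B → A` satisfying the
equivariance axiom (E1) `E ∘ α = E ∘ α ∘ E` and (E2) multiplicativity on the
hereditary subalgebra `[ABA]`. -/
def IsAlphaExpectation (A : NonUnitalStarSubalgebra ℂ B) (α : B →⋆ₙₐ[ℂ] B)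
    (E : B →L[ℂ] B) : Prop :=
  IsCondExp A E ∧ (∀ x, E (α x) = E (α (E x))) ∧
    (∀ x ∈ hereditarySpan A, ∀ y ∈ hereditarySpan A, E (x * y) = E x * E y)

set_option linter.unusedSectionVars false

noncomputable local instance : NonUnitalCStarAlgebra B :=
  { ‹NonUnitalNormedRing B›, ‹StarRing B›, ‹CStarRing B›, ‹NormedSpace ℂ B›,
    ‹IsScalarTower ℂ B B›, ‹SMulCommClass ℂ B B›, ‹StarModule ℂ B›, ‹CompleteSpace B› with }

lemma LinearMap.map_star_of_isSelfAdjoint {M N : Type*} [AddCommGroup M] [Module ℂ M]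
    [StarAddMonoid M] [StarModule ℂ M] [AddCommGroup N] [Module ℂ N] [StarAddMonoid N]
    [StarModule ℂ N] (f : M →ₗ[ℂ] N) (hf : ∀ x, IsSelfAdjoint x → IsSelfAdjoint (f x)) (x : M) :
    f (star x) = star (f x) := by
  rw [← realPart_add_I_smul_imaginaryPart x]
  simp only [star_add, star_smul, map_add, map_smul, (realPart x).2.star_eq,
    (imaginaryPart x).2.star_eq, (hf _ (realPart x).2).star_eq,
    (hf _ (imaginaryPart x).2).star_eq, Complex.star_def, Complex.conj_I]

section PositiveMap

variable {E : B →L[ℂ] B}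

lemma apply_star_mul_mul_nonpos_of_apply_sq (hE : ∀ x, 0 ≤ x → 0 ≤ E x)
    {τ : B} (hτ : IsSelfAdjoint τ) {x : B} (h : E (star x * (τ * τ) * x) = 0) :
    E (star x * τ * x) ≤ 0 := by
  have hbound : ∀ t : ℝ, 0 < t → E (star x * τ * x) ≤ (t / 2) • E (star x * x) := by
    intro t ht
    have hsq : star (τ * x - t • x) * (τ * x - t • x) = star x * (τ * τ) * x
        - (2 * t) • (star x * τ * x) + (t * t) • (star x * x) := by
      rw [star_sub, star_smul, star_mul, hτ.star_eq, star_trivial t]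
      simp only [sub_mul, mul_sub, smul_mul_assoc, mul_smul_comm, mul_assoc]
      module
    have hpos := hE _ (star_mul_self_nonneg (τ * x - t • x))
    rw [hsq, map_add, map_sub, h, E.map_smul_of_tower, E.map_smul_of_tower, zero_sub,
      neg_add_eq_sub, sub_nonneg] at hpos
    have h2t : (0 : ℝ) < 2 * t := by positivity
    calc E (star x * τ * x) = (2 * t)⁻¹ • ((2 * t) • E (star x * τ * x)) := by
          rw [inv_smul_smul₀ h2t.ne']
      _ ≤ (2 * t)⁻¹ • ((t * t) • E (star x * x)) := smul_le_smul_of_nonneg_left hpos (by positivity)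
      _ = (t / 2) • E (star x * x) := by
          rw [smul_smul]; congr 1; field_simp
  have hlim : Filter.Tendsto (fun t : ℝ => (t / 2) • E (star x * x)) (nhdsWithin 0 (Set.Ioi 0))
      (nhds 0) := by
    refine tendsto_nhdsWithin_of_tendsto_nhds ?_
    simpa using (Continuous.tendsto (f := fun t : ℝ => (t / 2) • E (star x * x)) (by fun_prop) 0)
  exact ge_of_tendsto hlim (eventually_nhdsWithin_of_forall hbound)

lemma apply_star_mul_mul_eq_zero_of_apply_sq (hE : ∀ x, 0 ≤ x → 0 ≤ E x)
    {τ : B} (hτ : IsSelfAdjoint τ) {x : B} (h : E (star x * (τ * τ) * x) = 0) :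
    E (star x * τ * x) = 0 := by
  refine le_antisymm (apply_star_mul_mul_nonpos_of_apply_sq hE hτ h) ?_
  have hneg := apply_star_mul_mul_nonpos_of_apply_sq hE hτ.neg (x := x) (by simpa using h)
  simpa using hneg

lemma apply_star_add_mul_add_eq_zero (hE : ∀ x, 0 ≤ x → 0 ≤ E x) {P : B} (hP : 0 ≤ P) {u v : B}
    (hu : E (star u * P * u) = 0) (hv : E (star v * P * v) = 0) :
    E (star (u + v) * P * (u + v)) = 0 := by
  have hparallelogram : star (u + v) * P * (u + v) + star (u - v) * P * (u - v)
      = star u * P * u + star u * P * u + (star v * P * v + star v * P * v) := by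
    rw [star_add, star_sub]; noncomm_ring
  have hsum := congrArg E hparallelogram
  rw [map_add, map_add, map_add, map_add, hu, hv, add_zero, add_zero] at hsum
  exact ((add_eq_zero_iff_of_nonneg (hE _ (star_left_conjugate_nonneg hP _))
    (hE _ (star_left_conjugate_nonneg hP _))).1 hsum).1

lemma apply_star_mul_mul_eq_zero_of_mem_topologicalClosure (hE : ∀ x, 0 ≤ x → 0 ≤ E x)
    {P : B} (hP : 0 ≤ P) {S : Set B} (hS : ∀ x ∈ S, E (star x * P * x) = 0) {x : B}
    (hx : x ∈ (Submodule.span ℂ S).topologicalClosure) : E (star x * P * x) = 0 := by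
  let N : Submodule ℂ B :=
    { carrier := {x | E (star x * P * x) = 0}
      add_mem' := apply_star_add_mul_add_eq_zero hE hP
      zero_mem' := by simp
      smul_mem' := fun r x (hx : E (star x * P * x) = 0) => by
        simp only [Set.mem_ofPred_eq, star_smul, smul_mul_assoc, mul_smul_comm, map_smul, hx,
          smul_zero] }
  have hN : IsClosed (N : Set B) := isClosed_eq (by fun_prop) continuous_const
  exact Submodule.topologicalClosure_minimal _ (Submodule.span_le.2 fun x hx => hS x hx) hN hx

end PositiveMap

namespace IsCondExp

variable {A : NonUnitalStarSubalgebra ℂ B} {E : B →L[ℂ] B}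

lemma monotone (hE : IsCondExp A E) : Monotone E := fun x y h => by
  simpa using hE.2.2.1 _ (sub_nonneg.2 h)

lemma map_star (hE : IsCondExp A E) (x : B) : E (star x) = star (E x) := by
  refine (E : B →ₗ[ℂ] B).map_star_of_isSelfAdjoint (fun w hw => ?_) x
  have hsplit : E w = E w⁺ - E w⁻ := by rw [← map_sub, CFC.posPart_sub_negPart w hw]
  simp only [ContinuousLinearMap.coe_coe, hsplit]
  exact (hE.2.2.1 _ (CFC.posPart_nonneg w)).isSelfAdjoint.sub
    (hE.2.2.1 _ (CFC.negPart_nonneg w)).isSelfAdjoint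

lemma star_mul_self_le (hE : IsCondExp A E) (v : B) : star (E v) * E v ≤ E (star v * v) := by
  have hEv : E v ∈ A := hE.1 v
  have hpos := hE.2.2.1 _ (star_mul_self_nonneg (v - E v))
  have hexpand : star (v - E v) * (v - E v)
      = star v * v - star v * E v - star (E v) * v + star (E v) * E v := by
    rw [star_sub]; noncomm_ring
  rw [hexpand, map_add, map_sub, map_sub, hE.2.2.2.2 _ hEv, hE.2.2.2.1 _ (star_mem hEv),
    hE.2.1 _ (mul_mem (star_mem hEv) hEv), hE.map_star] at hpos
  rw [← sub_nonneg]
  convert hpos using 1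
  abel

lemma eq_zero_of_apply_star_mul_self (hE : IsCondExp A E) {v : B} (h : E (star v * v) = 0) :
    E v = 0 := by
  rw [← CStarRing.star_mul_self_eq_zero_iff]
  exact le_antisymm (h ▸ hE.star_mul_self_le v) (star_mul_self_nonneg _)

lemma apply_mul_eq_zero_of_apply_star_mul_self (hE : IsCondExp A E) {v : B}
    (h : E (star v * v) = 0) (y : B) : E (y * v) = 0 := by
  refine hE.eq_zero_of_apply_star_mul_self (le_antisymm ?_ (hE.2.2.1 _ (star_mul_self_nonneg _)))
  calc E (star (y * v) * (y * v)) = E (star v * (star y * y) * v) := by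
        rw [star_mul]; noncomm_ring
    _ ≤ E (‖star y * y‖ • (star v * v)) := hE.monotone CStarAlgebra.star_left_conjugate_le_norm_smul
    _ = 0 := by rw [E.map_smul_of_tower, h, smul_zero]

end IsCondExp


section Hereditary

variable {A : NonUnitalStarSubalgebra ℂ B}

lemma mul_mul_mem_hereditarySpan {a b : B} (ha : a ∈ A) (hb : b ∈ A) (x : B) :
    a * x * b ∈ hereditarySpan A :=
  subset_closure (Submodule.subset_span ⟨a, ha, b, hb, x, rfl⟩)

lemma mul_mul_mem_hereditarySpan_of_mem {c : B} (hc : c ∈ hereditarySpan A) (y : B) {a : B}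
    (ha : a ∈ A) : c * (y * a) ∈ hereditarySpan A := by
  unfold hereditarySpan at hc ⊢
  set G := {z : B | ∃ a ∈ A, ∃ b ∈ A, ∃ x : B, z = a * x * b}
  have hle : (Submodule.span ℂ G).map (LinearMap.mulRight ℂ (y * a)) ≤ Submodule.span ℂ G := by
    refine (Submodule.map_span_le _ _ _).2 ?_
    rintro _ ⟨a₁, ha₁, b₁, -, x₁, rfl⟩
    exact Submodule.subset_span ⟨a₁, ha₁, a, ha, x₁ * (b₁ * y), by simp [mul_assoc]⟩
  exact map_mem_closure (f := (· * (y * a))) (continuous_mul_const _) hc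
    fun z hz => hle (Submodule.mem_map_of_mem hz)

lemma star_mem_hereditarySpan {c : B} (hc : c ∈ hereditarySpan A) :
    star c ∈ hereditarySpan A := by
  unfold hereditarySpan at hc ⊢
  set G := {z : B | ∃ a ∈ A, ∃ b ∈ A, ∃ x : B, z = a * x * b}
  have hle : (Submodule.span ℂ G).map (starLinearEquiv ℂ (A := B)).toLinearMap
      ≤ Submodule.span ℂ G := by
    refine (Submodule.map_span_le _ _ _).2 ?_
    rintro _ ⟨a₁, ha₁, b₁, hb₁, x₁, rfl⟩
    exact Submodule.subset_span ⟨star b₁, star_mem hb₁, star a₁, star_mem ha₁, star x₁,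
      by simp [mul_assoc]⟩
  exact map_mem_closure continuous_star hc fun z hz => hle (Submodule.mem_map_of_mem hz)

end Hereditary

lemma IsSelfAdjoint.eq_zero_of_mul_mul_self_eq_zero {R : Type*} [NonUnitalNormedRing R]
    [StarRing R] [CStarRing R] {σ : R} (hσ : IsSelfAdjoint σ) (h : σ * (σ * σ) = 0) : σ = 0 := by
  have hsq : σ * σ = 0 := by
    rw [← CStarRing.star_mul_self_eq_zero_iff, star_mul, hσ.star_eq, mul_assoc, h, mul_zero]
  rwa [← CStarRing.star_mul_self_eq_zero_iff, hσ.star_eq]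

namespace IsCondExp

variable {A : NonUnitalStarSubalgebra ℂ B} {E : B →L[ℂ] B}

lemma apply_star_mul_sq_mul_eq_zero (hE : IsCondExp A E)
    (hmul : ∀ x ∈ hereditarySpan A, ∀ y ∈ hereditarySpan A, E (x * y) = E x * E y)
    {τ : B} (hτA : τ ∈ hereditarySpan A) (hτ : IsSelfAdjoint τ) (hτE : ∀ y, E (τ * y) = 0)
    (w : B) : E (star w * (τ * τ) * w) = 0 := by
  set σ := E (star w * (τ * τ) * w) with hσ_def
  have hσA : σ ∈ A := hE.1 _
  have hσ : IsSelfAdjoint σ :=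
    (hE.2.2.1 _ (star_left_conjugate_nonneg hτ.mul_self_nonneg w)).isSelfAdjoint
  set ζ := τ * (w * σ)
  have hζ : ζ ∈ hereditarySpan A := mul_mul_mem_hereditarySpan_of_mem hτA w hσA
  refine hσ.eq_zero_of_mul_mul_self_eq_zero ?_
  calc σ * (σ * σ) = E (σ * (star w * (τ * τ) * w) * σ) := by
        rw [hE.2.2.2.2 _ hσA, hE.2.2.2.1 _ hσA, ← hσ_def, mul_assoc]
    _ = E (star ζ * ζ) := by
        congr 1
        simp only [ζ, star_mul, hτ.star_eq, hσ.star_eq]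
        noncomm_ring
    _ = 0 := by rw [hmul _ (star_mem_hereditarySpan hζ) _ hζ, hτE, mul_zero]

lemma apply_star_mul_mul_eq_zero_of_mem_hereditarySpan (hE : IsCondExp A E)
    (hmul : ∀ x ∈ hereditarySpan A, ∀ y ∈ hereditarySpan A, E (x * y) = E x * E y)
    {τ : B} (hτA : τ ∈ hereditarySpan A) (hτ : IsSelfAdjoint τ) (hτE : E τ = 0) (x : B) :
    E (star x * τ * x) = 0 := by
  have hsq : E (star τ * τ) = 0 := by rw [hτ.star_eq, hmul τ hτA τ hτA, hτE, mul_zero]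
  have hτE' (y : B) : E (τ * y) = 0 := by
    rw [← star_star (τ * y), hE.map_star, star_mul, hτ.star_eq,
      hE.apply_mul_eq_zero_of_apply_star_mul_self hsq, star_zero]
  exact apply_star_mul_mul_eq_zero_of_apply_sq hE.2.2.1 hτ
    (hE.apply_star_mul_sq_mul_eq_zero hmul hτA hτ hτE' x)

end IsCondExp

def expectationKernel {R M F : Type*} [NonUnitalRing R] [AddGroup M] [FunLike F R M]
    [AddMonoidHomClass F R M] (E : F) : TwoSidedIdeal R :=
  .mk' {x | ∀ b c, E (b * x * c) = 0}
    (fun b c => by simp)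
    (fun hx hy b c => by simp [mul_add, add_mul, hx b c, hy b c])
    (fun hx b c => by simp [hx b c])
    (fun hy b c => by simpa [mul_assoc] using hy (b * _) c)
    (fun hx b c => by simpa [mul_assoc] using hx b (_ * c))

section expectationKernel

variable {R M F : Type*} [NonUnitalRing R] [AddGroup M] [FunLike F R M] [AddMonoidHomClass F R M]
  {E : F}

lemma mem_expectationKernel {x : R} : x ∈ expectationKernel E ↔ ∀ b c, E (b * x * c) = 0 :=
  TwoSidedIdeal.mem_mk' ..

lemma coe_expectationKernel : (expectationKernel E : Set R) = {x | ∀ b c, E (b * x * c) = 0} :=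
  TwoSidedIdeal.coe_mk' ..

lemma isClosed_expectationKernel [TopologicalSpace R] [ContinuousMul R] [TopologicalSpace M]
    [T1Space M] (hE : Continuous E) : IsClosed (expectationKernel E : Set R) := by
  simp only [coe_expectationKernel, Set.ofPred_forall]
  exact isClosed_iInter fun b => isClosed_iInter fun c =>
    isClosed_singleton.preimage (hE.comp (by fun_prop))

end expectationKernel


lemma prodOf_cons_cons (α : B → B) (p q : ℕ × B) (l : List (ℕ × B)) :
    prodOf α (p :: q :: l) = α^[p.1] p.2 * prodOf α (q :: l) := by
  simp only [prodOf, ← List.foldl_map (f := fun r : ℕ × B => α^[r.1] r.2)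
    (g := (· * ·))]
  exact List.foldl_assoc

def IsAlphaNull (E : B →L[ℂ] B) (α : B →⋆ₙₐ[ℂ] B) (x : B) : Prop :=
  ∀ g ∈ expectationKernel E, E (star x * α (star g * g) * x) = 0

lemma star_alpha_mul_alpha_mul_alpha (α : B →⋆ₙₐ[ℂ] B) (g β : B) :
    star (α β) * α (star g * g) * α β = α (star (g * β) * (g * β)) := by
  simp only [← map_star, ← map_mul, star_mul, mul_assoc]

lemma IsAlphaNull.alpha_mul {α : B →⋆ₙₐ[ℂ] B} {E : B →L[ℂ] B} {u : B}
    (hu : IsAlphaNull E α u) (β : B) : IsAlphaNull E α (α β * u) := fun g hg => by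
  rw [star_mul, show star u * star (α β) * α (star g * g) * (α β * u)
    = star u * (star (α β) * α (star g * g) * α β) * u by noncomm_ring,
    star_alpha_mul_alpha_mul_alpha]
  exact hu _ (TwoSidedIdeal.mul_mem_right _ _ _ hg)

namespace IsAlphaExpectation

variable {A : NonUnitalStarSubalgebra ℂ B} {α : B →⋆ₙₐ[ℂ] B} {E : B →L[ℂ] B}

lemma apply_star_mul_self_eq_zero (hE : IsAlphaExpectation A α E) {g : B}
    (hg : g ∈ expectationKernel E) : E (star g * g) = 0 := by
  refine hE.1.eq_zero_of_apply_star_mul_self ?_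
  simpa [star_mul, mul_assoc] using mem_expectationKernel.1 hg (star g) (star g * g)

lemma apply_alpha_star_mul_self_eq_zero (hE : IsAlphaExpectation A α E) {g : B}
    (hg : g ∈ expectationKernel E) : E (α (star g * g)) = 0 := by
  rw [hE.2.1, hE.apply_star_mul_self_eq_zero hg, map_zero, map_zero]

lemma isAlphaNull_alpha (hE : IsAlphaExpectation A α E) (β : B) : IsAlphaNull E α (α β) :=
  fun g hg => by
    rw [star_alpha_mul_alpha_mul_alpha]
    exact hE.apply_alpha_star_mul_self_eq_zero (TwoSidedIdeal.mul_mem_right _ _ _ hg)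

lemma isAlphaNull_of_mem (hE : IsAlphaExpectation A α E) {a : B} (ha : a ∈ A) :
    IsAlphaNull E α a := fun g hg => by
  rw [hE.1.2.2.2.2 _ ha, hE.1.2.2.2.1 _ (star_mem ha), hE.apply_alpha_star_mul_self_eq_zero hg,
    mul_zero, zero_mul]

lemma isAlphaNull_mul_of_mem (hE : IsAlphaExpectation A α E) {a : B} (ha : a ∈ A) (u : B) :
    IsAlphaNull E α (a * u) := fun g hg => by
  have hτ : IsSelfAdjoint (star a * α (star g * g) * a) := by
    simp [IsSelfAdjoint, star_mul, ← map_star, mul_assoc]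
  rw [star_mul, show star u * star a * α (star g * g) * (a * u)
    = star u * (star a * α (star g * g) * a) * u by noncomm_ring]
  exact hE.1.apply_star_mul_mul_eq_zero_of_mem_hereditarySpan hE.2.2
    (mul_mul_mem_hereditarySpan (star_mem ha) ha _) hτ (hE.isAlphaNull_of_mem ha g hg) u

lemma isAlphaNull_iterate (hE : IsAlphaExpectation A α E) {a : B} (ha : a ∈ A) :
    ∀ n, IsAlphaNull E α (α^[n] a)
  | 0 => hE.isAlphaNull_of_mem ha
  | n + 1 => by
    rw [Function.iterate_succ_apply']
    exact hE.isAlphaNull_alpha _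

lemma isAlphaNull_iterate_mul (hE : IsAlphaExpectation A α E) {a u : B} (ha : a ∈ A)
    (hu : IsAlphaNull E α u) : ∀ n, IsAlphaNull E α (α^[n] a * u)
  | 0 => hE.isAlphaNull_mul_of_mem ha u
  | n + 1 => by
    rw [Function.iterate_succ_apply']
    exact hu.alpha_mul _

lemma isAlphaNull_prodOf (hE : IsAlphaExpectation A α E) (p : ℕ × B) (l : List (ℕ × B))
    (hl : ∀ q ∈ p :: l, q.2 ∈ A) : IsAlphaNull E α (prodOf α (p :: l)) := by
  induction l generalizing p with
  | nil => exact hE.isAlphaNull_iterate (hl p List.mem_cons_self) p.1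
  | cons q l ih =>
    rw [prodOf_cons_cons]
    exact hE.isAlphaNull_iterate_mul (hl p List.mem_cons_self)
      (ih q fun r hr => hl r (List.mem_cons_of_mem _ hr)) p.1

lemma isAlphaNull (hE : IsAlphaExpectation A α E) (hdyn : IsDynSystem A α) (x : B) :
    IsAlphaNull E α x := fun g hg => by
  refine apply_star_mul_mul_eq_zero_of_mem_topologicalClosure hE.1.2.2.1
    (by simpa only [map_star, map_mul] using star_mul_self_nonneg (α g)) ?_
    (by rw [show _ = ⊤ from hdyn]; trivial)
  rintro _ ⟨_ | ⟨p, l⟩, hne, hl, rfl⟩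
  · exact absurd rfl hne
  · exact hE.isAlphaNull_prodOf p l hl g hg

lemma alpha_mem_expectationKernel (hE : IsAlphaExpectation A α E) (hdyn : IsDynSystem A α)
    {k : B} (hk : k ∈ expectationKernel E) : α k ∈ expectationKernel E := by
  refine mem_expectationKernel.2 fun b c => ?_
  have hconj : star (α k * c) * (α k * c) = star c * α (star k * k) * c := by
    simp only [star_mul, map_mul, map_star, mul_assoc]
  rw [mul_assoc]
  exact hE.1.apply_mul_eq_zero_of_apply_star_mul_self (hconj ▸ hE.isAlphaNull hdyn c k hk) b

end IsAlphaExpectation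

theorem alphaExpectation_kernel_invariant_general (A : NonUnitalStarSubalgebra ℂ B)
    (α : B →⋆ₙₐ[ℂ] B) (hdyn : IsDynSystem A α)
    (E : B →L[ℂ] B) (hE : IsAlphaExpectation A α E) :
    (∀ k : B, (∀ b c : B, E (b * k * c) = 0) → ∀ b c : B, E (b * α k * c) = 0) ∧
      IsClosed {x : B | ∀ b c : B, E (b * x * c) = 0} ∧
      (∃ I : TwoSidedIdeal B, (I : Set B) = {x : B | ∀ b c : B, E (b * x * c) = 0}) := by
  refine ⟨fun k hk => ?_, ?_, ⟨expectationKernel E, coe_expectationKernel⟩⟩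
  · exact mem_expectationKernel.1
      (hE.alpha_mem_expectationKernel hdyn (mem_expectationKernel.2 hk))
  · rw [← coe_expectationKernel]
    exact isClosed_expectationKernel E.continuous

/-- For an `α`-expectation `E` on an `A`-dynamical system, the kernel ideal
`ker E = {x : E(BxB) = 0}` is an `α`-invariant closed two-sided ideal of `B`. -/
theorem alphaExpectation_kernel_invariant (A : NonUnitalStarSubalgebra ℂ B)
    (hA : IsClosed (A : Set B)) (α : B →⋆ₙₐ[ℂ] B) (hdyn : IsDynSystem A α)
    (E : B →L[ℂ] B) (hE : IsAlphaExpectation A α E) :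
    (∀ k : B, (∀ b c : B, E (b * k * c) = 0) → ∀ b c : B, E (b * α k * c) = 0) ∧
      IsClosed {x : B | ∀ b c : B, E (b * x * c) = 0} ∧
      (∃ I : TwoSidedIdeal B, (I : Set B) = {x : B | ∀ b c : B, E (b * x * c) = 0}) :=
  alphaExpectation_kernel_invariant_general A α hdyn E hE
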